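/- Let 𝒵 ⊂ ℝ^{d_z} satisfy sup_{z,z'∈𝒵}‖z−z'‖ < Δ_z, let e_1,…,e_K ∈ 𝒵, β > 0, and define the softmax posterior q(J = j|e,z) = exp(−β‖z − e_j‖²)/Σ_{k=1}^K exp(−β‖z − e_k‖²). If z, ẑ ∈ 𝒵 satisfy ‖z − ẑ‖ ≤ δ, then for every j ∈ {1,…,K}, q(J = j|e,z) ≤ exp(8βΔ_zδ) · q(J = j|e,ẑ); i.e. the softmax posterior satisfies the multiplicative stability condition with h(δ) = 8βΔ_zδ. -/
import Mathlib


open Real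

noncomputable section

/-- Appendix E.1.3: on a latent set of diameter less than `Δz`, the
softmax index posterior `q(J=j|e,z) ∝ exp(−β‖z−e_j‖²)` satisfies the multiplicative
stability condition with `h(δ) = 8βΔzδ`: if `‖z−zh‖ ≤ δ` then
`q(J=j|e,z) ≤ exp(8βΔzδ) q(J=j|e,zh)` for every `j`. -/
theorem softmax_posterior_multiplicative_stability
    (dz K : ℕ)
    (𝓩 : Set (EuclideanSpace ℝ (Fin dz)))
    (Δz β δ : ℝ) (hβ : 0 < β)
    (hdiam : ∀ z ∈ 𝓩, ∀ z' ∈ 𝓩, dist z z' < Δz)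
    (e : Fin K → EuclideanSpace ℝ (Fin dz)) (he : ∀ k, e k ∈ 𝓩)
    (z zh : EuclideanSpace ℝ (Fin dz)) (hz : z ∈ 𝓩) (hzh : zh ∈ 𝓩)
    (hclose : ‖z - zh‖ ≤ δ) (j : Fin K) :
    Real.exp (-β * ‖z - e j‖ ^ 2) / (∑ k, Real.exp (-β * ‖z - e k‖ ^ 2))
      ≤ Real.exp (8 * β * Δz * δ) *
        (Real.exp (-β * ‖zh - e j‖ ^ 2) / (∑ k, Real.exp (-β * ‖zh - e k‖ ^ 2))) := by
  have hδ0 : 0 ≤ δ := le_trans (norm_nonneg _) hclose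
  have hΔ0 : 0 < Δz := lt_of_le_of_lt dist_nonneg (hdiam z hz z hz)
  set c := 2 * β * Δz * δ with hc
  have hc0 : 0 ≤ c := by positivity
  have key : ∀ w ∈ 𝓩, -β * ‖z - w‖ ^ 2 ≤ c + -β * ‖zh - w‖ ^ 2 ∧
      -β * ‖zh - w‖ ^ 2 ≤ c + -β * ‖z - w‖ ^ 2 := by
    intro w hw
    have h1 : ‖z - w‖ < Δz := by
      simpa [dist_eq_norm] using hdiam z hz w hw
    have h2 : ‖zh - w‖ < Δz := by
      simpa [dist_eq_norm] using hdiam zh hzh w hw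
    have h3 : |‖z - w‖ - ‖zh - w‖| ≤ δ := by
      calc |‖z - w‖ - ‖zh - w‖| ≤ ‖(z - w) - (zh - w)‖ := abs_norm_sub_norm_le _ _
        _ = ‖z - zh‖ := by rw [sub_sub_sub_cancel_right]
        _ ≤ δ := hclose
    have h4 : |‖z - w‖ ^ 2 - ‖zh - w‖ ^ 2| ≤ δ * (2 * Δz) := by
      have heq : ‖z - w‖ ^ 2 - ‖zh - w‖ ^ 2
          = (‖z - w‖ - ‖zh - w‖) * (‖z - w‖ + ‖zh - w‖) := by ring
      rw [heq, abs_mul]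
      apply mul_le_mul h3 _ (abs_nonneg _) hδ0
      rw [abs_of_nonneg (by positivity)]
      linarith
    obtain ⟨h5, h6⟩ := abs_le.mp h4
    constructor <;> nlinarith [hβ.le]
  have num : Real.exp (-β * ‖z - e j‖ ^ 2)
      ≤ Real.exp c * Real.exp (-β * ‖zh - e j‖ ^ 2) := by
    rw [← Real.exp_add]; exact Real.exp_le_exp.mpr ((key _ (he j)).1)
  have den : (∑ k, Real.exp (-β * ‖zh - e k‖ ^ 2))
      ≤ Real.exp c * ∑ k, Real.exp (-β * ‖z - e k‖ ^ 2) := by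
    rw [Finset.mul_sum]
    refine Finset.sum_le_sum fun k _ => ?_
    rw [← Real.exp_add]; exact Real.exp_le_exp.mpr ((key _ (he k)).2)
  have hS : 0 < ∑ k, Real.exp (-β * ‖z - e k‖ ^ 2) :=
    Finset.sum_pos (fun k _ => Real.exp_pos _) ⟨j, Finset.mem_univ j⟩
  have hSh : 0 < ∑ k, Real.exp (-β * ‖zh - e k‖ ^ 2) :=
    Finset.sum_pos (fun k _ => Real.exp_pos _) ⟨j, Finset.mem_univ j⟩
  have h8 : Real.exp c * Real.exp c ≤ Real.exp (8 * β * Δz * δ) := by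
    rw [← Real.exp_add]
    apply Real.exp_le_exp.mpr
    nlinarith
  rw [mul_div_assoc', div_le_div_iff₀ hS hSh]
  have hN : 0 < Real.exp (-β * ‖zh - e j‖ ^ 2) := Real.exp_pos _
  nlinarith [mul_le_mul num den (Finset.sum_nonneg fun k _ => (Real.exp_pos _).le)
      (by positivity : (0:ℝ) ≤ Real.exp c * Real.exp (-β * ‖zh - e j‖ ^ 2)),
    mul_le_mul_of_nonneg_right h8 (mul_nonneg hN.le hS.le)]
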